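/- arXiv:math/0601194 — 2 statements merged into one kernel-verified Lean document; each statement's English description precedes it below -/
import Mathlib

section
/- For all integers n, m ≥ −1, the operators V_n and V_m satisfy the Virasoro commutation relation [V_n, V_m] = (n − m)·V_{n+m} as ℝ[s]-linear endomorphisms of the polynomial ring P. -/
/-!
Statement 0: the operators `V_k` (k ≥ −1) on `P = ℝ[s][t₀,t₁,…]` satisfy the Virasoro
commutation relations `[V_n, V_m] = (n − m) V_{n+m}`.
-/

open MvPolynomial
open Finset

set_option maxHeartbeats 2000000

noncomputable section

/-- The polynomial ring `P = ℝ[s][t₀, t₁, t₂, …]`; the variable `s` is `Polynomial.X`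
in the coefficient ring. -/
abbrev P : Type := MvPolynomial ℕ (Polynomial ℝ)

/-- The odd double factorial `(2n+1)!! = (2n+1)!/(2^n n!)` as a real number. -/
def doubleFactorialOdd (n : ℕ) : ℝ :=
  (Nat.factorial (2 * n + 1) : ℝ) / ((2 : ℝ) ^ n * Nat.factorial n)

/-- `(2j−1)!!` with the convention `(−1)!! = 1`. -/
def doubleFactorialOddPred (j : ℕ) : ℝ :=
  if j = 0 then 1 else doubleFactorialOdd (j - 1)

/-- `α_i = (−2)^i/(2i+1)!`. -/
def alphaCoeff (i : ℕ) : ℝ := (-2 : ℝ) ^ i / Nat.factorial (2 * i + 1)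

/-- The Virasoro operator
`V_k = −(1/2) Σ_{i≥0} (2(i+k)+3)!! α_i s^i ∂/∂t_{i+k+1}
      + (1/2) Σ_{j≥0, j+k≥0} ((2(j+k)+1)!!/(2j−1)!!) t_j ∂/∂t_{j+k}
      + (1/4) Σ_{d₁+d₂=k−1} (2d₁+1)!!(2d₂+1)!! ∂²/∂t_{d₁}∂t_{d₂}
      + δ_{k,−1} t₀²/4 + δ_{k,0}/16`,
defined for all `k : ℤ` (intended for `k ≥ −1`).  Applied to a fixed polynomial each
infinite sum has finite support, so `∑ᶠ` gives the intended value. -/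
def Vop (k : ℤ) : P → P := fun p =>
  (∑ᶠ i : ℕ,
      (Polynomial.C (-(1 / 2 : ℝ) * doubleFactorialOdd ((i + k + 1 : ℤ)).toNat *
            alphaCoeff i) * Polynomial.X ^ i) •
        pderiv ((i + k + 1 : ℤ)).toNat p)
  + (∑ᶠ j : ℕ,
      if 0 ≤ (j : ℤ) + k then
        Polynomial.C ((1 / 2 : ℝ) * doubleFactorialOdd ((j + k : ℤ)).toNat /
            doubleFactorialOddPred j) •
          (X j * pderiv ((j + k : ℤ)).toNat p)
      else 0)
  + (if 1 ≤ k then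
      ∑ d ∈ Finset.HasAntidiagonal.antidiagonal (k - 1).toNat,
        Polynomial.C ((1 / 4 : ℝ) * doubleFactorialOdd d.1 * doubleFactorialOdd d.2) •
          pderiv d.1 (pderiv d.2 p)
     else 0)
  + (if k = -1 then Polynomial.C ((1 / 4 : ℝ)) • (X 0 * X 0 * p) else 0)
  + (if k = 0 then Polynomial.C ((1 / 16 : ℝ)) • p else 0)

def Bnd (N : ℕ) (p : P) : Prop := ∀ r : ℕ, N ≤ r → pderiv r p = 0
def Ao (f : ℕ → Polynomial ℝ) (M : ℕ) (p : P) : P :=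
  ∑ r ∈ Finset.range M, f r • pderiv r p
def Bo (g : ℕ → ℕ → Polynomial ℝ) (M : ℕ) (p : P) : P :=
  ∑ j ∈ Finset.range M, ∑ u ∈ Finset.range M, g j u • (X j * pderiv u p)
def Co (h : ℕ → ℕ → Polynomial ℝ) (M : ℕ) (p : P) : P :=
  ∑ a ∈ Finset.range M, ∑ b ∈ Finset.range M, h a b • pderiv a (pderiv b p)

def fA (k : ℤ) (r : ℕ) : Polynomial ℝ :=
  if (k+1).toNat ≤ r then
    Polynomial.C (-(1/2 : ℝ) * doubleFactorialOdd r * alphaCoeff (r - (k+1).toNat)) *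
      Polynomial.X ^ (r - (k+1).toNat)
  else 0
def gB (k : ℤ) (j u : ℕ) : Polynomial ℝ :=
  if (u:ℤ) = (j:ℤ) + k then
    Polynomial.C ((1/2 : ℝ) * doubleFactorialOdd u / doubleFactorialOddPred j) else 0
def hCo (k : ℤ) (a b : ℕ) : Polynomial ℝ :=
  if (a:ℤ) + (b:ℤ) = k - 1 then
    Polynomial.C ((1/4:ℝ) * doubleFactorialOdd a * doubleFactorialOdd b) else 0
def qD (k : ℤ) : P :=
  if k = -1 then Polynomial.C (1/4 : ℝ) • (X 0 * X 0) else
    if k = 0 then Polynomial.C (1/16:ℝ) • 1 else 0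

lemma partA_eq (k : ℤ) (hk : -1 ≤ k) (p : P) {N M : ℕ} (hB : Bnd N p) (hM1 : N + 1 ≤ M) :
    (∑ᶠ i : ℕ,
      (Polynomial.C (-(1 / 2 : ℝ) * doubleFactorialOdd ((i + k + 1 : ℤ)).toNat *
            alphaCoeff i) * Polynomial.X ^ i) •
        pderiv ((i + k + 1 : ℤ)).toNat p) = Ao (fA k) M p := by
  set c : ℕ := (k+1).toNat with hc
  have h1 : (∑ᶠ i : ℕ,
      (Polynomial.C (-(1 / 2 : ℝ) * doubleFactorialOdd ((i + k + 1 : ℤ)).toNat *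
            alphaCoeff i) * Polynomial.X ^ i) •
        pderiv ((i + k + 1 : ℤ)).toNat p)
      = ∑ i ∈ Finset.range M, (Polynomial.C (-(1 / 2 : ℝ) *
          doubleFactorialOdd ((i + k + 1 : ℤ)).toNat * alphaCoeff i) * Polynomial.X ^ i) •
        pderiv ((i + k + 1 : ℤ)).toNat p := by
    apply finsum_eq_sum_of_support_subset
    intro i hi
    simp only [Function.mem_support, ne_eq] at hi
    by_contra hmem
    simp only [Finset.coe_range, Set.mem_Iio, not_lt] at hmem
    apply hi
    rw [hB ((i + k + 1 : ℤ)).toNat (by omega), smul_zero]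
  rw [h1]
  have h2 : ∀ i ∈ Finset.range M, (Polynomial.C (-(1 / 2 : ℝ) *
          doubleFactorialOdd ((i + k + 1 : ℤ)).toNat * alphaCoeff i) * Polynomial.X ^ i) •
        pderiv ((i + k + 1 : ℤ)).toNat p = fA k (i + c) • pderiv (i + c) p := by
    intro i _
    have hidx : ((i : ℤ) + k + 1).toNat = i + c := by omega
    rw [hidx, fA, if_pos (Nat.le_add_left c i), Nat.add_sub_cancel]
  rw [Finset.sum_congr rfl h2]
  have h3 : ∑ i ∈ Finset.range M, fA k (i + c) • pderiv (i + c) p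
      = ∑ r ∈ Finset.Ico c (c + M), fA k r • pderiv r p := by
    rw [Finset.sum_Ico_eq_sum_range]
    simp only [Nat.add_sub_cancel_left]
    exact Finset.sum_congr rfl fun i _ => by rw [Nat.add_comm c i]
  rw [h3]
  have h4 : ∑ r ∈ Finset.Ico c (c + M), fA k r • pderiv r p
      = ∑ r ∈ Finset.range (c + M), fA k r • pderiv r p := by
    apply Finset.sum_subset
    · intro r hr; simp only [Finset.mem_Ico] at hr; exact Finset.mem_range.2 hr.2
    · intro r hr hnot
      simp only [Finset.mem_range] at hr
      simp only [Finset.mem_Ico, not_and, not_lt] at hnot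
      have : r < c := by by_contra h; exact absurd (hnot (by omega)) (by omega)
      rw [fA, if_neg (by omega), zero_smul]
  rw [h4, Ao]
  symm
  apply Finset.sum_subset
  · intro r hr; simp only [Finset.mem_range] at *; omega
  · intro r hr hnot
    simp only [Finset.mem_range, not_lt] at hnot
    rw [hB r (by omega), smul_zero]

lemma pderiv_X_mul (r j : ℕ) (q : P) :
    pderiv r (X j * q) = (if r = j then q else 0) + X j * pderiv r q := by
  classical
  rw [pderiv_mul, pderiv_X, Pi.single_apply]
  by_cases h : r = j
  · subst h; simp
  · simp only [if_neg h, if_neg (fun h' : j = r => h h'.symm)]; simp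

lemma pderiv_comm' (a b : ℕ) (p : P) : pderiv a (pderiv b p) = pderiv b (pderiv a p) := by
  induction p using MvPolynomial.induction_on with
  | C c => simp
  | add p q hp hq => simp [hp, hq]
  | mul_X p n hp =>
    rw [mul_comm, pderiv_X_mul, pderiv_X_mul, map_add, map_add, pderiv_X_mul, pderiv_X_mul, hp]
    by_cases h1 : a = n <;> by_cases h2 : b = n <;> simp [h1, h2] <;> ring

lemma partB_eq (k : ℤ) (hk : -1 ≤ k) (p : P) {N M : ℕ} (hB : Bnd N p) (hM1 : N + 1 ≤ M) :
    (∑ᶠ j : ℕ,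
      if 0 ≤ (j : ℤ) + k then
        Polynomial.C ((1 / 2 : ℝ) * doubleFactorialOdd ((j + k : ℤ)).toNat /
            doubleFactorialOddPred j) •
          (X j * pderiv ((j + k : ℤ)).toNat p)
      else 0) = Bo (gB k) M p := by
  have h1 : (∑ᶠ j : ℕ,
      if 0 ≤ (j : ℤ) + k then
        Polynomial.C ((1 / 2 : ℝ) * doubleFactorialOdd ((j + k : ℤ)).toNat /
            doubleFactorialOddPred j) •
          (X j * pderiv ((j + k : ℤ)).toNat p)
      else 0) = ∑ j ∈ Finset.range M,
      (if 0 ≤ (j : ℤ) + k then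
        Polynomial.C ((1 / 2 : ℝ) * doubleFactorialOdd ((j + k : ℤ)).toNat /
            doubleFactorialOddPred j) •
          (X j * pderiv ((j + k : ℤ)).toNat p)
      else 0) := by
    apply finsum_eq_sum_of_support_subset
    intro j hj
    simp only [Function.mem_support, ne_eq] at hj
    by_contra hmem
    simp only [Finset.coe_range, Set.mem_Iio, not_lt] at hmem
    apply hj
    by_cases hg : 0 ≤ (j : ℤ) + k
    · rw [if_pos hg, hB ((j + k : ℤ)).toNat (by omega), mul_zero, smul_zero]
    · rw [if_neg hg]
  rw [h1, Bo]
  apply Finset.sum_congr rfl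
  intro j hj
  simp only [Finset.mem_range] at hj
  by_cases hg : 0 ≤ (j : ℤ) + k
  · rw [if_pos hg]
    set u₀ : ℕ := ((j : ℤ) + k).toNat with hu
    by_cases hu₀ : u₀ < M
    · rw [Finset.sum_eq_single u₀]
      · rw [gB, if_pos (by omega)]
      · intro u _ hne
        rw [gB, if_neg (by omega), zero_smul]
      · intro habs; exact absurd (Finset.mem_range.2 hu₀) habs
    · rw [hB u₀ (by omega), mul_zero, smul_zero]
      symm
      apply Finset.sum_eq_zero
      intro u hu'
      simp only [Finset.mem_range] at hu'
      rw [gB, if_neg (by omega), zero_smul]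
  · rw [if_neg hg]
    symm
    apply Finset.sum_eq_zero
    intro u _
    rw [gB, if_neg (by omega), zero_smul]

lemma partC_eq (k : ℤ) (hk : -1 ≤ k) (p : P) {M : ℕ} (hM2 : k.toNat ≤ M) :
    (if 1 ≤ k then
      ∑ d ∈ Finset.HasAntidiagonal.antidiagonal (k - 1).toNat,
        Polynomial.C ((1 / 4 : ℝ) * doubleFactorialOdd d.1 * doubleFactorialOdd d.2) •
          pderiv d.1 (pderiv d.2 p)
     else 0) = Co (hCo k) M p := by
  rw [Co, ← Finset.sum_product']
  by_cases h1 : 1 ≤ k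
  · rw [if_pos h1]
    have hcong : ∑ d ∈ Finset.HasAntidiagonal.antidiagonal (k - 1).toNat,
        Polynomial.C ((1 / 4 : ℝ) * doubleFactorialOdd d.1 * doubleFactorialOdd d.2) •
          pderiv d.1 (pderiv d.2 p)
        = ∑ d ∈ Finset.HasAntidiagonal.antidiagonal (k - 1).toNat, hCo k d.1 d.2 • pderiv d.1 (pderiv d.2 p) := by
      apply Finset.sum_congr rfl
      intro d hd
      simp only [Finset.HasAntidiagonal.mem_antidiagonal] at hd
      rw [hCo, if_pos (by omega)]
    rw [hcong]
    apply Finset.sum_subset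
    · intro d hd
      simp only [Finset.HasAntidiagonal.mem_antidiagonal] at hd
      simp only [Finset.mem_product, Finset.mem_range]
      omega
    · intro d _ hd
      simp only [Finset.HasAntidiagonal.mem_antidiagonal] at hd
      rw [hCo, if_neg (by omega), zero_smul]
  · rw [if_neg h1]
    symm
    apply Finset.sum_eq_zero
    intro d _
    rw [hCo, if_neg (by omega), zero_smul]

lemma partD_eq (k : ℤ) (p : P) :
    (if k = -1 then Polynomial.C ((1 / 4 : ℝ)) • (X 0 * X 0 * p) else 0)
    + (if k = 0 then Polynomial.C ((1 / 16 : ℝ)) • p else 0) = qD k * p := by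
  rw [qD]
  by_cases h1 : k = -1
  · rw [if_pos h1, if_pos h1, if_neg (by omega), smul_mul_assoc, mul_assoc, add_zero]
  · rw [if_neg h1, if_neg h1, zero_add]
    by_cases h2 : k = 0
    · rw [if_pos h2, if_pos h2, smul_mul_assoc, one_mul]
    · rw [if_neg h2, if_neg h2, zero_mul]

lemma Vop_eq (k : ℤ) (hk : -1 ≤ k) (p : P) {N M : ℕ} (hB : Bnd N p) (hM1 : N + 1 ≤ M)
    (hM2 : k.toNat ≤ M) :
    Vop k p = Ao (fA k) M p + Bo (gB k) M p + Co (hCo k) M p + qD k * p := by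
  rw [Vop, partA_eq k hk p hB hM1, partB_eq k hk p hB hM1, partC_eq k hk p hM2,
    add_assoc (Ao (fA k) M p + Bo (gB k) M p + Co (hCo k) M p), partD_eq]
abbrev Rc := Polynomial ℝ

lemma pderiv3_comm (r a b : ℕ) (p : P) :
    pderiv r (pderiv a (pderiv b p)) = pderiv a (pderiv b (pderiv r p)) := by
  rw [pderiv_comm' r a (pderiv b p), pderiv_comm' r b p]

lemma L_AA (f f' : ℕ → Rc) (M : ℕ) (p : P) : Ao f M (Ao f' M p) = Ao f' M (Ao f M p) := by
  have key : ∀ (g g' : ℕ → Rc), Ao g M (Ao g' M p)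
      = ∑ r ∈ range M, ∑ a ∈ range M, (g r * g' a) • pderiv r (pderiv a p) := by
    intro g g'
    simp only [Ao, map_sum, Derivation.map_smul, smul_sum, smul_smul]
  rw [key, key, Finset.sum_comm]
  refine Finset.sum_congr rfl fun a _ => Finset.sum_congr rfl fun r _ => ?_
  rw [mul_comm, pderiv_comm']

lemma L_AC (f : ℕ → Rc) (h : ℕ → ℕ → Rc) (M : ℕ) (p : P) :
    Ao f M (Co h M p) = Co h M (Ao f M p) := by
  simp only [Ao, Co, map_sum, Derivation.map_smul, smul_sum, smul_smul]
  rw [Finset.sum_comm]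
  refine Finset.sum_congr rfl fun a _ => ?_
  rw [Finset.sum_comm]
  refine Finset.sum_congr rfl fun b _ => Finset.sum_congr rfl fun r _ => ?_
  rw [mul_comm, pderiv3_comm]

lemma pderiv4_comm (c d a b : ℕ) (p : P) :
    pderiv c (pderiv d (pderiv a (pderiv b p)))
      = pderiv a (pderiv b (pderiv c (pderiv d p))) := by
  rw [pderiv3_comm d a b p, pderiv3_comm c a b (pderiv d p)]

lemma L_CC (h h' : ℕ → ℕ → Rc) (M : ℕ) (p : P) : Co h M (Co h' M p) = Co h' M (Co h M p) := by
  have key : ∀ (k k' : ℕ → ℕ → Rc), Co k M (Co k' M p)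
      = ∑ a ∈ range M, ∑ b ∈ range M, ∑ c ∈ range M, ∑ d ∈ range M,
          (k a b * k' c d) • pderiv a (pderiv b (pderiv c (pderiv d p))) := by
    intro k k'
    simp only [Co, map_sum, Derivation.map_smul, smul_sum, smul_smul]
  have e1 : ∀ (k k' : ℕ → ℕ → Rc),
      (∑ a ∈ range M, ∑ b ∈ range M, ∑ c ∈ range M, ∑ d ∈ range M,
          (k a b * k' c d) • pderiv a (pderiv b (pderiv c (pderiv d p))))
      = ∑ z ∈ range M ×ˢ range M, ∑ w ∈ range M ×ˢ range M,
          (k z.1 z.2 * k' w.1 w.2) • pderiv z.1 (pderiv z.2 (pderiv w.1 (pderiv w.2 p))) := by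
    intro k k'
    rw [← Finset.sum_product' (f := fun a b => ∑ c ∈ range M, ∑ d ∈ range M,
          (k a b * k' c d) • pderiv a (pderiv b (pderiv c (pderiv d p))))]
    refine Finset.sum_congr rfl fun z _ => ?_
    rw [← Finset.sum_product' (f := fun c d =>
          (k z.1 z.2 * k' c d) • pderiv z.1 (pderiv z.2 (pderiv c (pderiv d p))))]
  rw [key, key, e1, e1, Finset.sum_comm]
  refine Finset.sum_congr rfl fun w _ => Finset.sum_congr rfl fun z _ => ?_
  rw [mul_comm, pderiv4_comm]

lemma L_AQ (f : ℕ → Rc) (q : P) (M : ℕ) (p : P) :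
    Ao f M (q * p) - q * Ao f M p = ∑ r ∈ range M, f r • (pderiv r q * p) := by
  simp only [Ao, pderiv_mul, smul_add, Finset.sum_add_distrib, Finset.mul_sum, mul_smul_comm]
  abel

lemma L_QQ (q q' : P) (p : P) : q * (q' * p) = q' * (q * p) := mul_left_comm q q' p
lemma L_BQ (g : ℕ → ℕ → Rc) (q : P) (M : ℕ) (p : P) :
    Bo g M (q * p) - q * Bo g M p
      = ∑ j ∈ range M, ∑ u ∈ range M, g j u • (X j * (pderiv u q * p)) := by
  simp only [Bo, pderiv_mul, mul_add, smul_add, Finset.sum_add_distrib, Finset.mul_sum,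
    mul_smul_comm, mul_left_comm q]
  abel

lemma L_CQ (h : ℕ → ℕ → Rc) (q : P) (M : ℕ) (p : P) :
    Co h M (q * p) - q * Co h M p
      = ∑ a ∈ range M, ∑ b ∈ range M, h a b •
          (pderiv a (pderiv b q) * p + pderiv b q * pderiv a p + pderiv a q * pderiv b p) := by
  simp only [Co, pderiv_mul, map_add, mul_add, smul_add, Finset.sum_add_distrib, Finset.mul_sum,
    mul_smul_comm]
  abel

lemma sum3_rot (F : ℕ → ℕ → ℕ → P) (s : Finset ℕ) :
    ∑ j ∈ s, ∑ u ∈ s, ∑ r ∈ s, F r j u = ∑ r ∈ s, ∑ j ∈ s, ∑ u ∈ s, F r j u := by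
  rw [show (∑ j ∈ s, ∑ u ∈ s, ∑ r ∈ s, F r j u) = ∑ j ∈ s, ∑ r ∈ s, ∑ u ∈ s, F r j u from
    Finset.sum_congr rfl fun j _ => Finset.sum_comm, Finset.sum_comm]

lemma pderiv_Bo (r : ℕ) (g : ℕ → ℕ → Rc) (M : ℕ) (p : P) :
    pderiv r (Bo g M p) = ∑ j ∈ range M, ∑ u ∈ range M,
      g j u • ((if r = j then pderiv u p else 0) + X j * pderiv r (pderiv u p)) := by
  simp only [Bo, map_sum, Derivation.map_smul, pderiv_X_mul]

lemma L_AB (f : ℕ → Rc) (g : ℕ → ℕ → Rc) (M : ℕ) (p : P) :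
    Ao f M (Bo g M p) - Bo g M (Ao f M p)
      = Ao (fun u => ∑ j ∈ range M, f j * g j u) M p := by
  have h1 : Ao f M (Bo g M p)
      = (∑ r ∈ range M, ∑ j ∈ range M, ∑ u ∈ range M,
          (f r * g j u) • (if r = j then pderiv u p else 0))
        + ∑ r ∈ range M, ∑ j ∈ range M, ∑ u ∈ range M,
          (f r * g j u) • (X j * pderiv r (pderiv u p)) := by
    rw [Ao]
    calc ∑ r ∈ range M, f r • pderiv r (Bo g M p)
        = ∑ r ∈ range M, ∑ j ∈ range M, ∑ u ∈ range M,
            ((f r * g j u) • (if r = j then pderiv u p else 0)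
              + (f r * g j u) • (X j * pderiv r (pderiv u p))) := by
          refine Finset.sum_congr rfl fun r _ => ?_
          rw [pderiv_Bo]
          simp only [smul_sum, smul_smul, smul_add]
      _ = _ := by simp only [Finset.sum_add_distrib]
  have h2 : Bo g M (Ao f M p)
      = ∑ r ∈ range M, ∑ j ∈ range M, ∑ u ∈ range M,
          (f r * g j u) • (X j * pderiv r (pderiv u p)) := by
    simp only [Bo, Ao, map_sum, Derivation.map_smul, Finset.mul_sum, mul_smul_comm, smul_sum,
      smul_smul]
    rw [show (∑ j ∈ range M, ∑ u ∈ range M, ∑ r ∈ range M,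
          (g j u * f r) • (X j * pderiv u (pderiv r p)))
        = ∑ j ∈ range M, ∑ u ∈ range M, ∑ r ∈ range M,
          (f r * g j u) • (X j * pderiv r (pderiv u p)) from
      Finset.sum_congr rfl fun j _ => Finset.sum_congr rfl fun u _ =>
        Finset.sum_congr rfl fun r _ => by rw [mul_comm, pderiv_comm']]
    exact sum3_rot (fun r j u => (f r * g j u) • (X j * pderiv r (pderiv u p))) (range M)
  rw [h1, h2, add_sub_cancel_right, Ao]
  calc ∑ r ∈ range M, ∑ j ∈ range M, ∑ u ∈ range M,
        (f r * g j u) • (if r = j then pderiv u p else 0)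
      = ∑ r ∈ range M, ∑ u ∈ range M, ∑ j ∈ range M,
        (if r = j then (f r * g j u) • pderiv u p else 0) := by
        refine Finset.sum_congr rfl fun r _ => ?_
        rw [Finset.sum_comm]
        refine Finset.sum_congr rfl fun u _ => Finset.sum_congr rfl fun j _ => ?_
        split_ifs <;> simp
    _ = ∑ r ∈ range M, ∑ u ∈ range M, (f r * g r u) • pderiv u p := by
        refine Finset.sum_congr rfl fun r hr => Finset.sum_congr rfl fun u _ => ?_
        rw [Finset.sum_ite_eq, if_pos hr]
    _ = ∑ u ∈ range M, (∑ j ∈ range M, f j * g j u) • pderiv u p := by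
        rw [Finset.sum_comm]
        exact Finset.sum_congr rfl fun u _ => (Finset.sum_smul).symm
lemma Bo_sub (K1 K2 : ℕ → ℕ → Rc) (M : ℕ) (p : P) :
    Bo K1 M p - Bo K2 M p = Bo (fun j u => K1 j u - K2 j u) M p := by
  simp only [Bo, sub_smul, Finset.sum_sub_distrib]

lemma Co_add' (K1 K2 : ℕ → ℕ → Rc) (M : ℕ) (p : P) :
    Co K1 M p + Co K2 M p = Co (fun a b => K1 a b + K2 a b) M p := by
  simp only [Co, add_smul, Finset.sum_add_distrib]

lemma Co_neg (K : ℕ → ℕ → Rc) (M : ℕ) (p : P) :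
    -Co K M p = Co (fun a b => -K a b) M p := by
  simp only [Co, neg_smul, Finset.sum_neg_distrib]

lemma L_BB (g g' : ℕ → ℕ → Rc) (M : ℕ) (p : P) :
    Bo g M (Bo g' M p) - Bo g' M (Bo g M p)
      = Bo (fun j u => ∑ l ∈ range M, (g j l * g' l u - g' j l * g l u)) M p := by
  have expand : ∀ G G' : ℕ → ℕ → Rc, Bo G M (Bo G' M p)
      = (∑ j ∈ range M, ∑ u ∈ range M, ∑ l ∈ range M, ∑ v ∈ range M,
          (G j u * G' l v) • (X j * (if u = l then pderiv v p else 0)))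
        + ∑ j ∈ range M, ∑ u ∈ range M, ∑ l ∈ range M, ∑ v ∈ range M,
          (G j u * G' l v) • (X j * (X l * pderiv u (pderiv v p))) := by
    intro G G'
    rw [Bo]
    calc ∑ j ∈ range M, ∑ u ∈ range M, G j u • (X j * pderiv u (Bo G' M p))
        = ∑ j ∈ range M, ∑ u ∈ range M, ∑ l ∈ range M, ∑ v ∈ range M,
            ((G j u * G' l v) • (X j * (if u = l then pderiv v p else 0))
              + (G j u * G' l v) • (X j * (X l * pderiv u (pderiv v p)))) := by
          refine Finset.sum_congr rfl fun j _ => Finset.sum_congr rfl fun u _ => ?_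
          rw [pderiv_Bo]
          simp only [Finset.mul_sum, smul_sum, mul_smul_comm, smul_smul, mul_add, smul_add]
      _ = _ := by simp only [Finset.sum_add_distrib]
  have delta_eq : ∀ G G' : ℕ → ℕ → Rc,
      (∑ j ∈ range M, ∑ u ∈ range M, ∑ l ∈ range M, ∑ v ∈ range M,
          (G j u * G' l v) • (X j * (if u = l then pderiv v p else 0)))
      = Bo (fun j u => ∑ l ∈ range M, G j l * G' l u) M p := by
    intro G G'
    rw [Bo]
    refine Finset.sum_congr rfl fun j _ => ?_
    calc ∑ u ∈ range M, ∑ l ∈ range M, ∑ v ∈ range M,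
          (G j u * G' l v) • (X j * (if u = l then pderiv v p else 0))
        = ∑ u ∈ range M, ∑ v ∈ range M, ∑ l ∈ range M,
          (if u = l then (G j u * G' l v) • (X j * pderiv v p) else 0) := by
          refine Finset.sum_congr rfl fun u _ => ?_
          rw [Finset.sum_comm]
          refine Finset.sum_congr rfl fun v _ => Finset.sum_congr rfl fun l _ => ?_
          split_ifs <;> simp
      _ = ∑ u ∈ range M, ∑ v ∈ range M, (G j u * G' u v) • (X j * pderiv v p) := by
          refine Finset.sum_congr rfl fun u hu => Finset.sum_congr rfl fun v _ => ?_
          rw [Finset.sum_ite_eq, if_pos hu]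
      _ = ∑ v ∈ range M, ∑ u ∈ range M, (G j u * G' u v) • (X j * pderiv v p) :=
          Finset.sum_comm
      _ = ∑ u ∈ range M, (∑ l ∈ range M, G j l * G' l u) • (X j * pderiv u p) := by
          refine Finset.sum_congr rfl fun v _ => ?_
          rw [Finset.sum_smul]
  have junk_pair : ∀ G G' : ℕ → ℕ → Rc,
      (∑ j ∈ range M, ∑ u ∈ range M, ∑ l ∈ range M, ∑ v ∈ range M,
          (G j u * G' l v) • (X j * (X l * pderiv u (pderiv v p))))
      = ∑ z ∈ range M ×ˢ range M, ∑ w ∈ range M ×ˢ range M,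
          (G z.1 z.2 * G' w.1 w.2) • (X z.1 * (X w.1 * pderiv z.2 (pderiv w.2 p))) := by
    intro G G'
    rw [← Finset.sum_product' (f := fun j u => ∑ l ∈ range M, ∑ v ∈ range M,
          (G j u * G' l v) • (X j * (X l * pderiv u (pderiv v p))))]
    refine Finset.sum_congr rfl fun z _ => ?_
    rw [← Finset.sum_product' (f := fun l v =>
          (G z.1 z.2 * G' l v) • (X z.1 * (X l * pderiv z.2 (pderiv v p))))]
  have junk_symm :
      (∑ z ∈ range M ×ˢ range M, ∑ w ∈ range M ×ˢ range M,
          (g z.1 z.2 * g' w.1 w.2) • (X z.1 * (X w.1 * pderiv z.2 (pderiv w.2 p))))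
      = ∑ z ∈ range M ×ˢ range M, ∑ w ∈ range M ×ˢ range M,
          (g' z.1 z.2 * g w.1 w.2) • (X z.1 * (X w.1 * pderiv z.2 (pderiv w.2 p))) := by
    rw [Finset.sum_comm]
    refine Finset.sum_congr rfl fun w _ => Finset.sum_congr rfl fun z _ => ?_
    rw [mul_comm, mul_left_comm, pderiv_comm']
  rw [expand g g', expand g' g, junk_pair g g', junk_pair g' g, junk_symm, delta_eq g g',
    delta_eq g' g]
  rw [show ∀ a b c : P, a + c - (b + c) = a - b from fun a b c => by abel, Bo_sub]
  refine Finset.sum_congr rfl fun j _ => Finset.sum_congr rfl fun u _ => ?_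
  simp only [Finset.sum_sub_distrib]

lemma L_BC (g : ℕ → ℕ → Rc) (h : ℕ → ℕ → Rc) (M : ℕ) (p : P) :
    Bo g M (Co h M p) - Co h M (Bo g M p)
      = Co (fun a b => -(∑ j ∈ range M, g j b * (h j a + h a j))) M p := by
  have expand2 : Co h M (Bo g M p)
      = ((∑ a ∈ range M, ∑ b ∈ range M, ∑ j ∈ range M, ∑ u ∈ range M,
          (h a b * g j u) • (if b = j then pderiv a (pderiv u p) else 0))
        + ∑ a ∈ range M, ∑ b ∈ range M, ∑ j ∈ range M, ∑ u ∈ range M,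
          (h a b * g j u) • (if a = j then pderiv b (pderiv u p) else 0))
        + ∑ a ∈ range M, ∑ b ∈ range M, ∑ j ∈ range M, ∑ u ∈ range M,
          (h a b * g j u) • (X j * pderiv a (pderiv b (pderiv u p))) := by
    rw [Co]
    calc ∑ a ∈ range M, ∑ b ∈ range M, h a b • pderiv a (pderiv b (Bo g M p))
        = ∑ a ∈ range M, ∑ b ∈ range M, ∑ j ∈ range M, ∑ u ∈ range M,
            (((h a b * g j u) • (if b = j then pderiv a (pderiv u p) else 0)
              + (h a b * g j u) • (if a = j then pderiv b (pderiv u p) else 0))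
              + (h a b * g j u) • (X j * pderiv a (pderiv b (pderiv u p)))) := by
          refine Finset.sum_congr rfl fun a _ => Finset.sum_congr rfl fun b _ => ?_
          rw [pderiv_Bo]
          rw [map_sum]
          simp only [map_sum, Derivation.map_smul, map_add, apply_ite (⇑(pderiv a)), map_zero,
            pderiv_X_mul, smul_sum, smul_smul, smul_add, add_assoc]
      _ = _ := by simp only [Finset.sum_add_distrib]
  have delta1 : (∑ a ∈ range M, ∑ b ∈ range M, ∑ j ∈ range M, ∑ u ∈ range M,
          (h a b * g j u) • (if b = j then pderiv a (pderiv u p) else 0))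
      = Co (fun a u => ∑ j ∈ range M, h a j * g j u) M p := by
    rw [Co]
    refine Finset.sum_congr rfl fun a _ => ?_
    calc ∑ b ∈ range M, ∑ j ∈ range M, ∑ u ∈ range M,
          (h a b * g j u) • (if b = j then pderiv a (pderiv u p) else 0)
        = ∑ b ∈ range M, ∑ u ∈ range M, ∑ j ∈ range M,
          (if b = j then (h a b * g j u) • pderiv a (pderiv u p) else 0) := by
          refine Finset.sum_congr rfl fun b _ => ?_
          rw [Finset.sum_comm]
          refine Finset.sum_congr rfl fun u _ => Finset.sum_congr rfl fun j _ => ?_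
          split_ifs <;> simp
      _ = ∑ b ∈ range M, ∑ u ∈ range M, (h a b * g b u) • pderiv a (pderiv u p) := by
          refine Finset.sum_congr rfl fun b hb => Finset.sum_congr rfl fun u _ => ?_
          rw [Finset.sum_ite_eq, if_pos hb]
      _ = ∑ u ∈ range M, ∑ b ∈ range M, (h a b * g b u) • pderiv a (pderiv u p) :=
          Finset.sum_comm
      _ = ∑ u ∈ range M, (∑ j ∈ range M, h a j * g j u) • pderiv a (pderiv u p) := by
          refine Finset.sum_congr rfl fun u _ => ?_
          rw [Finset.sum_smul]
  have delta2 : (∑ a ∈ range M, ∑ b ∈ range M, ∑ j ∈ range M, ∑ u ∈ range M,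
          (h a b * g j u) • (if a = j then pderiv b (pderiv u p) else 0))
      = Co (fun b u => ∑ j ∈ range M, h j b * g j u) M p := by
    rw [Co]
    calc ∑ a ∈ range M, ∑ b ∈ range M, ∑ j ∈ range M, ∑ u ∈ range M,
          (h a b * g j u) • (if a = j then pderiv b (pderiv u p) else 0)
        = ∑ a ∈ range M, ∑ b ∈ range M, ∑ u ∈ range M, (h a b * g a u) • pderiv b (pderiv u p) := by
          refine Finset.sum_congr rfl fun a ha => Finset.sum_congr rfl fun b _ => ?_
          calc ∑ j ∈ range M, ∑ u ∈ range M,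
              (h a b * g j u) • (if a = j then pderiv b (pderiv u p) else 0)
              = ∑ u ∈ range M, ∑ j ∈ range M,
                  (if a = j then (h a b * g j u) • pderiv b (pderiv u p) else 0) := by
                rw [Finset.sum_comm]
                refine Finset.sum_congr rfl fun u _ => Finset.sum_congr rfl fun j _ => ?_
                split_ifs <;> simp
            _ = ∑ u ∈ range M, (h a b * g a u) • pderiv b (pderiv u p) := by
                refine Finset.sum_congr rfl fun u _ => ?_
                rw [Finset.sum_ite_eq, if_pos ha]
      _ = ∑ b ∈ range M, ∑ a ∈ range M, ∑ u ∈ range M, (h a b * g a u) • pderiv b (pderiv u p) :=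
          Finset.sum_comm
      _ = ∑ b ∈ range M, ∑ u ∈ range M, ∑ a ∈ range M, (h a b * g a u) • pderiv b (pderiv u p) :=
          Finset.sum_congr rfl fun b _ => Finset.sum_comm
      _ = ∑ b ∈ range M, ∑ u ∈ range M, (∑ j ∈ range M, h j b * g j u) • pderiv b (pderiv u p) := by
          refine Finset.sum_congr rfl fun b _ => Finset.sum_congr rfl fun u _ => ?_
          rw [Finset.sum_smul]
  have junk_eq : Bo g M (Co h M p)
      = ∑ a ∈ range M, ∑ b ∈ range M, ∑ j ∈ range M, ∑ u ∈ range M,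
          (h a b * g j u) • (X j * pderiv a (pderiv b (pderiv u p))) := by
    have lhs_eq : Bo g M (Co h M p)
        = ∑ z ∈ range M ×ˢ range M, ∑ w ∈ range M ×ˢ range M,
            (g z.1 z.2 * h w.1 w.2) • (X z.1 * pderiv z.2 (pderiv w.1 (pderiv w.2 p))) := by
      rw [Bo]
      calc ∑ j ∈ range M, ∑ u ∈ range M, g j u • (X j * pderiv u (Co h M p))
          = ∑ j ∈ range M, ∑ u ∈ range M, ∑ a ∈ range M, ∑ b ∈ range M,
              (g j u * h a b) • (X j * pderiv u (pderiv a (pderiv b p))) := by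
            refine Finset.sum_congr rfl fun j _ => Finset.sum_congr rfl fun u _ => ?_
            rw [Co]
            simp only [map_sum, Derivation.map_smul, Finset.mul_sum, mul_smul_comm, smul_sum,
              smul_smul]
        _ = _ := by
            rw [← Finset.sum_product' (f := fun j u => ∑ a ∈ range M, ∑ b ∈ range M,
                  (g j u * h a b) • (X j * pderiv u (pderiv a (pderiv b p))))]
            refine Finset.sum_congr rfl fun z _ => ?_
            rw [← Finset.sum_product' (f := fun a b =>
                  (g z.1 z.2 * h a b) • (X z.1 * pderiv z.2 (pderiv a (pderiv b p))))]
    have rhs_eq : (∑ a ∈ range M, ∑ b ∈ range M, ∑ j ∈ range M, ∑ u ∈ range M,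
          (h a b * g j u) • (X j * pderiv a (pderiv b (pderiv u p))))
        = ∑ w ∈ range M ×ˢ range M, ∑ z ∈ range M ×ˢ range M,
            (h w.1 w.2 * g z.1 z.2) • (X z.1 * pderiv w.1 (pderiv w.2 (pderiv z.2 p))) := by
      rw [← Finset.sum_product' (f := fun a b => ∑ j ∈ range M, ∑ u ∈ range M,
            (h a b * g j u) • (X j * pderiv a (pderiv b (pderiv u p))))]
      refine Finset.sum_congr rfl fun w _ => ?_
      rw [← Finset.sum_product' (f := fun j u =>
            (h w.1 w.2 * g j u) • (X j * pderiv w.1 (pderiv w.2 (pderiv u p))))]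
    rw [lhs_eq, rhs_eq, Finset.sum_comm]
    refine Finset.sum_congr rfl fun w _ => Finset.sum_congr rfl fun z _ => ?_
    rw [mul_comm, pderiv3_comm]
  rw [expand2, junk_eq, delta1, delta2]
  rw [show ∀ x y z : P, z - (x + y + z) = -x - y from fun x y z => by abel]
  rw [Co_neg, sub_eq_add_neg, Co_neg, Co_add', Co, Co]
  refine Finset.sum_congr rfl fun a _ => Finset.sum_congr rfl fun b _ => ?_
  rw [← neg_add, ← Finset.sum_add_distrib,
    show (∑ j ∈ range M, (h a j * g j b + h j a * g j b))
      = ∑ j ∈ range M, g j b * (h j a + h a j) from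
      Finset.sum_congr rfl fun j _ => by ring]
lemma dfo_pos (n : ℕ) : 0 < doubleFactorialOdd n := by
  apply div_pos
  · exact_mod_cast Nat.factorial_pos _
  · positivity

lemma dfo_ne (n : ℕ) : doubleFactorialOdd n ≠ 0 := ne_of_gt (dfo_pos n)

lemma dfo_zero : doubleFactorialOdd 0 = 1 := by
  norm_num [doubleFactorialOdd]

lemma dfo_succ (n : ℕ) : doubleFactorialOdd (n+1) = (2*(n:ℝ)+3) * doubleFactorialOdd n := by
  simp only [doubleFactorialOdd]
  rw [show 2*(n+1)+1 = (2*n+1) + 1 + 1 from by ring, Nat.factorial_succ ((2*n+1)+1),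
    Nat.factorial_succ (2*n+1), Nat.factorial_succ n, pow_succ]
  have h1 : ((2:ℝ))^n ≠ 0 := by positivity
  have h2 : (Nat.factorial n : ℝ) ≠ 0 := by exact_mod_cast (Nat.factorial_pos n).ne'
  push_cast
  field_simp
  ring

lemma dfop_zero : doubleFactorialOddPred 0 = 1 := by simp [doubleFactorialOddPred]

lemma dfop_succ (j : ℕ) : doubleFactorialOddPred (j+1) = doubleFactorialOdd j := by
  simp [doubleFactorialOddPred]

lemma dfo_eq_pred (j : ℕ) : doubleFactorialOdd j = (2*(j:ℝ)+1) * doubleFactorialOddPred j := by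
  cases j with
  | zero => rw [dfo_zero, dfop_zero]; norm_num
  | succ j => rw [dfop_succ, dfo_succ]; push_cast; ring

lemma dfop_pos (j : ℕ) : 0 < doubleFactorialOddPred j := by
  cases j with
  | zero => rw [dfop_zero]; norm_num
  | succ j => rw [dfop_succ]; exact dfo_pos j

lemma dfop_ne (j : ℕ) : doubleFactorialOddPred j ≠ 0 := ne_of_gt (dfop_pos j)

/-- collapse of a sum against a `gB` factor on the right -/
lemma sum_mul_gB (k : ℤ) (φ : ℕ → Polynomial ℝ) (u M : ℕ) (hk : -1 ≤ k) (hM : u + 2 ≤ M) :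
    ∑ j ∈ range M, φ j * gB k j u
      = if h : 0 ≤ (u:ℤ) - k then φ (((u:ℤ)-k).toNat) * gB k (((u:ℤ)-k).toNat) u else 0 := by
  split_ifs with h
  · apply Finset.sum_eq_single_of_mem _ (Finset.mem_range.2 (by omega))
    intro j _ hne
    rw [gB, if_neg (by omega), mul_zero]
  · apply Finset.sum_eq_zero
    intro j _
    rw [gB, if_neg (by omega), mul_zero]

lemma idA (n m : ℤ) (hm : -1 ≤ m) (hmn : m < n) (u M : ℕ) (hM : u + 2 ≤ M) :
    ∑ j ∈ Finset.range M, (fA n j * gB m j u - fA m j * gB n j u)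
      = Polynomial.C ((n - m : ℤ) : ℝ) * fA (n + m) u := by
  have hn : (0:ℤ) ≤ n := by omega
  rw [Finset.sum_sub_distrib, sum_mul_gB m (fA n) u M hm hM,
    sum_mul_gB n (fA m) u M (by omega) hM]
  by_cases hcase : (n + m + 1 : ℤ) ≤ u
  · rw [dif_pos (by omega), dif_pos (by omega)]
    set j₁ : ℕ := ((u:ℤ) - m).toNat with hj₁def
    set j₂ : ℕ := ((u:ℤ) - n).toNat with hj₂def
    rw [fA, if_pos (show ((n+1).toNat ≤ j₁) by omega),
        gB, if_pos (show ((u:ℤ) = (j₁:ℤ) + m) by omega),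
        fA, if_pos (show ((m+1).toNat ≤ j₂) by omega),
        gB, if_pos (show ((u:ℤ) = (j₂:ℤ) + n) by omega),
        fA, if_pos (show ((n+m+1).toNat ≤ u) by omega)]
    have hi₁ : j₁ - (n+1).toNat = u - (n+m+1).toNat := by omega
    have hi₂ : j₂ - (m+1).toNat = u - (n+m+1).toNat := by omega
    rw [hi₁, hi₂]
    set i : ℕ := u - (n+m+1).toNat with hidef
    have e1 : (j₁:ℝ) = (u:ℝ) - (m:ℝ) := by
      have : (j₁:ℤ) = (u:ℤ) - m := by omega
      exact_mod_cast this
    have e2 : (j₂:ℝ) = (u:ℝ) - (n:ℝ) := by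
      have : (j₂:ℤ) = (u:ℤ) - n := by omega
      exact_mod_cast this
    have key : (-(1/2 : ℝ) * doubleFactorialOdd j₁ * alphaCoeff i)
          * ((1/2 : ℝ) * doubleFactorialOdd u / doubleFactorialOddPred j₁)
        - (-(1/2 : ℝ) * doubleFactorialOdd j₂ * alphaCoeff i)
          * ((1/2 : ℝ) * doubleFactorialOdd u / doubleFactorialOddPred j₂)
        = ((n:ℝ) - (m:ℝ)) * (-(1/2:ℝ) * doubleFactorialOdd u * alphaCoeff i) := by
      rw [dfo_eq_pred j₁, dfo_eq_pred j₂]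
      field_simp [dfop_ne]
      rw [e1, e2]
      ring
    have merge : ∀ (x y z w : ℝ) (i : ℕ),
        Polynomial.C x * Polynomial.X ^ i * Polynomial.C y
          - Polynomial.C z * Polynomial.X ^ i * Polynomial.C w
        = Polynomial.C (x*y - z*w) * Polynomial.X ^ i := by
      intros x y z w i
      rw [Polynomial.C_sub, Polynomial.C_mul, Polynomial.C_mul]; ring
    rw [merge, key, show ((n - m : ℤ):ℝ) = ((n:ℝ) - (m:ℝ)) from by push_cast; ring,
      Polynomial.C_mul, mul_assoc]
  · have z1 : (if h : 0 ≤ (u:ℤ) - m then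
          fA n (((u:ℤ)-m).toNat) * gB m (((u:ℤ)-m).toNat) u else 0) = 0 := by
      split_ifs with h
      · rw [fA, if_neg (by omega), zero_mul]
      · rfl
    have z2 : (if h : 0 ≤ (u:ℤ) - n then
          fA m (((u:ℤ)-n).toNat) * gB n (((u:ℤ)-n).toNat) u else 0) = 0 := by
      split_ifs with h
      · rw [fA, if_neg (by omega), zero_mul]
      · rfl
    rw [z1, z2, sub_zero, fA, if_neg (show ¬((n+m+1).toNat ≤ u) by omega), mul_zero]
def gCQ (n m : ℤ) (j u : ℕ) : Polynomial ℝ :=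
  if m = -1 ∧ j = 0 then Polynomial.C (1/2 : ℝ) * (hCo n u 0 + hCo n 0 u) else 0

lemma idB (n m : ℤ) (hm : -1 ≤ m) (hmn : m < n) (j u M : ℕ) (hM : u + 2 ≤ M) :
    (∑ l ∈ range M, (gB n j l * gB m l u - gB m j l * gB n l u)) + gCQ n m j u
      = Polynomial.C ((n - m : ℤ):ℝ) * gB (n+m) j u := by
  have hn : (0:ℤ) ≤ n := by omega
  rw [Finset.sum_sub_distrib, sum_mul_gB m (fun l => gB n j l) u M hm hM,
    sum_mul_gB n (fun l => gB m j l) u M (by omega) hM]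
  by_cases hz : (u:ℤ) = (j:ℤ) + n + m
  · -- u = j + n + m
    rw [dif_pos (by omega)]
    set l₁ : ℕ := ((u:ℤ) - m).toNat with hl₁def
    have hl₁ : (l₁:ℤ) = (j:ℤ) + n := by omega
    have el₁ : (l₁:ℝ) = (j:ℝ) + (n:ℝ) := by exact_mod_cast hl₁
    rw [show gB n j l₁ = Polynomial.C ((1/2 : ℝ) * doubleFactorialOdd l₁ / doubleFactorialOddPred j)
        from by rw [gB, if_pos (by omega)],
      show gB m l₁ u = Polynomial.C ((1/2 : ℝ) * doubleFactorialOdd u / doubleFactorialOddPred l₁)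
        from by rw [gB, if_pos (by omega)],
      show gB (n+m) j u = Polynomial.C ((1/2 : ℝ) * doubleFactorialOdd u / doubleFactorialOddPred j)
        from by rw [gB, if_pos (by omega)]]
    by_cases hjm : 0 ≤ (j:ℤ) + m
    · -- generic: second collapse present, gCQ vanishes
      rw [dif_pos (by omega)]
      set l₂ : ℕ := ((u:ℤ) - n).toNat with hl₂def
      have hl₂ : (l₂:ℤ) = (j:ℤ) + m := by omega
      have el₂ : (l₂:ℝ) = (j:ℝ) + (m:ℝ) := by exact_mod_cast hl₂
      rw [show gB m j l₂ = Polynomial.C ((1/2:ℝ) * doubleFactorialOdd l₂ / doubleFactorialOddPred j)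
          from by rw [gB, if_pos (by omega)],
        show gB n l₂ u = Polynomial.C ((1/2:ℝ) * doubleFactorialOdd u / doubleFactorialOddPred l₂)
          from by rw [gB, if_pos (by omega)],
        gCQ, if_neg (by rintro ⟨rfl, rfl⟩; simp at hjm), add_zero]
      rw [← Polynomial.C_mul, ← Polynomial.C_mul, ← Polynomial.C_sub, ← Polynomial.C_mul]
      congr 1
      rw [dfo_eq_pred l₁, dfo_eq_pred l₂]
      field_simp [dfop_ne]
      rw [el₁, el₂]
      push_cast
      ring
    · -- m = -1, j = 0 : gCQ contributes
      have hm1 : m = -1 := by omega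
      have hj0 : j = 0 := by omega
      rw [dif_neg (by omega)]
      rw [gCQ, if_pos ⟨hm1, hj0⟩,
        show hCo n u 0 = Polynomial.C ((1/4:ℝ) * doubleFactorialOdd u * doubleFactorialOdd 0)
          from by rw [hCo, if_pos (by omega)],
        show hCo n 0 u = Polynomial.C ((1/4:ℝ) * doubleFactorialOdd 0 * doubleFactorialOdd u)
          from by rw [hCo, if_pos (by omega)]]
      rw [sub_zero, ← Polynomial.C_mul, ← Polynomial.C_add, ← Polynomial.C_mul,
        ← Polynomial.C_mul, ← Polynomial.C_add]
      congr 1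
      rw [dfo_eq_pred l₁, dfo_zero, hj0, dfop_zero]
      field_simp [dfop_ne]
      rw [el₁]
      push_cast [hj0, hm1]
      ring
  · -- off-diagonal: everything vanishes
    have z1 : (if h : 0 ≤ (u:ℤ) - m then
        gB n j (((u:ℤ)-m).toNat) * gB m (((u:ℤ)-m).toNat) u else 0) = 0 := by
      split_ifs with h
      · rw [gB, if_neg (by omega), zero_mul]
      · rfl
    have z2 : (if h : 0 ≤ (u:ℤ) - n then
        gB m j (((u:ℤ)-n).toNat) * gB n (((u:ℤ)-n).toNat) u else 0) = 0 := by
      split_ifs with h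
      · rw [gB, if_neg (by omega), zero_mul]
      · rfl
    have z3 : gCQ n m j u = 0 := by
      rw [gCQ]
      split_ifs with h
      · obtain ⟨h1, h2⟩ := h
        rw [hCo, if_neg (by omega), hCo, if_neg (by omega), add_zero, mul_zero]
      · rfl
    rw [z1, z2, z3, sub_zero, add_zero, gB, if_neg (by omega), mul_zero]

lemma gB_eq (k : ℤ) (j y : ℕ) (h : (y:ℤ) = (j:ℤ) + k) :
    gB k j y = Polynomial.C ((1/2:ℝ) * doubleFactorialOdd y / doubleFactorialOddPred j) := by
  rw [gB, if_pos h]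

lemma gB_zero (k : ℤ) (j y : ℕ) (h : (y:ℤ) ≠ (j:ℤ) + k) : gB k j y = 0 := by
  rw [gB, if_neg h]

lemma hCo_eq (k : ℤ) (x y : ℕ) (h : (x:ℤ) + (y:ℤ) = k - 1) :
    hCo k x y = Polynomial.C ((1/4:ℝ) * doubleFactorialOdd x * doubleFactorialOdd y) := by
  rw [hCo, if_pos h]

lemma hCo_zero (k : ℤ) (x y : ℕ) (h : (x:ℤ) + (y:ℤ) ≠ k - 1) : hCo k x y = 0 := by
  rw [hCo, if_neg h]

lemma sum_gB_hCo (k k' : ℤ) (hk : -1 ≤ k) (x y M : ℕ) (hM : y + 2 ≤ M) :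
    (∑ j ∈ range M, gB k j y * (hCo k' j x + hCo k' x j))
      = if h : 0 ≤ (y:ℤ) - k then
          gB k (((y:ℤ)-k).toNat) y *
            (hCo k' (((y:ℤ)-k).toNat) x + hCo k' x (((y:ℤ)-k).toNat))
        else 0 := by
  split_ifs with h
  · apply Finset.sum_eq_single_of_mem _ (Finset.mem_range.2 (by omega))
    intro l _ hne
    rw [gB_zero k l y (by omega), zero_mul]
  · apply Finset.sum_eq_zero
    intro l _
    rw [gB_zero k l y (by omega), zero_mul]

lemma idC (n m : ℤ) (hm : -1 ≤ m) (hmn : m < n) (a b M : ℕ) (hMa : a + 2 ≤ M)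
    (hMb : b + 2 ≤ M) :
    ((∑ j ∈ range M, (gB m j b * (hCo n j a + hCo n a j) - gB n j b * (hCo m j a + hCo m a j)))
      + ∑ j ∈ range M, (gB m j a * (hCo n j b + hCo n b j) - gB n j a * (hCo m j b + hCo m b j)))
      = Polynomial.C ((n - m : ℤ):ℝ) * (hCo (n+m) a b + hCo (n+m) b a) := by
  have hn : (0:ℤ) ≤ n := by omega
  rw [Finset.sum_sub_distrib, Finset.sum_sub_distrib,
    sum_gB_hCo m n hm a b M hMb, sum_gB_hCo n m (by omega) a b M hMb,
    sum_gB_hCo m n hm b a M hMa, sum_gB_hCo n m (by omega) b a M hMa]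
  by_cases hz : (a:ℤ) + b = n + m - 1
  · by_cases g2 : 0 ≤ (b:ℤ) - n
    · -- b ≥ n; a < m
      rw [dif_pos (by omega), dif_pos g2, dif_neg (by omega), dif_neg (by omega), sub_zero,
        add_zero]
      set j₁ : ℕ := ((b:ℤ) - m).toNat with hj₁def
      set j₂ : ℕ := ((b:ℤ) - n).toNat with hj₂def
      have ej₁ : (j₁:ℝ) = (b:ℝ) - (m:ℝ) := by
        have : (j₁:ℤ) = (b:ℤ) - m := by omega
        exact_mod_cast this
      have ej₂ : (j₂:ℝ) = (b:ℝ) - (n:ℝ) := by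
        have : (j₂:ℤ) = (b:ℤ) - n := by omega
        exact_mod_cast this
      rw [gB_eq m j₁ b (by omega), gB_eq n j₂ b (by omega), hCo_eq n j₁ a (by omega),
        hCo_eq n a j₁ (by omega), hCo_eq m j₂ a (by omega), hCo_eq m a j₂ (by omega),
        hCo_eq (n+m) a b (by omega), hCo_eq (n+m) b a (by omega)]
      simp only [← Polynomial.C_add, ← Polynomial.C_mul, ← Polynomial.C_sub]
      rw [Polynomial.C_inj]
      rw [dfo_eq_pred j₁, dfo_eq_pred j₂]
      field_simp [dfop_ne]
      rw [ej₁, ej₂]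
      push_cast
      ring
    · by_cases g4 : 0 ≤ (a:ℤ) - n
      · -- a ≥ n; b < m
        rw [dif_neg (by omega), dif_neg g2, dif_pos (by omega), dif_pos g4, sub_zero, zero_add]
        set j₃ : ℕ := ((a:ℤ) - m).toNat with hj₃def
        set j₄ : ℕ := ((a:ℤ) - n).toNat with hj₄def
        have ej₃ : (j₃:ℝ) = (a:ℝ) - (m:ℝ) := by
          have : (j₃:ℤ) = (a:ℤ) - m := by omega
          exact_mod_cast this
        have ej₄ : (j₄:ℝ) = (a:ℝ) - (n:ℝ) := by
          have : (j₄:ℤ) = (a:ℤ) - n := by omega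
          exact_mod_cast this
        rw [gB_eq m j₃ a (by omega), gB_eq n j₄ a (by omega), hCo_eq n j₃ b (by omega),
          hCo_eq n b j₃ (by omega), hCo_eq m j₄ b (by omega), hCo_eq m b j₄ (by omega),
          hCo_eq (n+m) a b (by omega), hCo_eq (n+m) b a (by omega)]
        simp only [← Polynomial.C_add, ← Polynomial.C_mul, ← Polynomial.C_sub]
        rw [Polynomial.C_inj]
        rw [dfo_eq_pred j₃, dfo_eq_pred j₄]
        field_simp [dfop_ne]
        rw [ej₃, ej₄]
        push_cast
        ring
      · -- m ≤ a,b ≤ n-1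
        rw [dif_pos (by omega), dif_neg g2, dif_pos (by omega), dif_neg g4, sub_zero, sub_zero]
        set j₁ : ℕ := ((b:ℤ) - m).toNat with hj₁def
        set j₃ : ℕ := ((a:ℤ) - m).toNat with hj₃def
        have ej₁ : (j₁:ℝ) = (b:ℝ) - (m:ℝ) := by
          have : (j₁:ℤ) = (b:ℤ) - m := by omega
          exact_mod_cast this
        have ej₃ : (j₃:ℝ) = (a:ℝ) - (m:ℝ) := by
          have : (j₃:ℤ) = (a:ℤ) - m := by omega
          exact_mod_cast this
        have ez : (a:ℝ) + (b:ℝ) = (n:ℝ) + (m:ℝ) - 1 := by exact_mod_cast hz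
        rw [gB_eq m j₁ b (by omega), gB_eq m j₃ a (by omega), hCo_eq n j₁ a (by omega),
          hCo_eq n a j₁ (by omega), hCo_eq n j₃ b (by omega), hCo_eq n b j₃ (by omega),
          hCo_eq (n+m) a b (by omega), hCo_eq (n+m) b a (by omega)]
        simp only [← Polynomial.C_add, ← Polynomial.C_mul, ← Polynomial.C_sub]
        rw [Polynomial.C_inj]
        rw [dfo_eq_pred j₁, dfo_eq_pred j₃]
        field_simp [dfop_ne]
        rw [ej₁, ej₃]
        push_cast
        rw [show (n:ℝ) = (a:ℝ) + (b:ℝ) + 1 - (m:ℝ) from by rw [ez]; ring]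
        ring
  · have z1 : (if h : 0 ≤ (b:ℤ) - m then
        gB m (((b:ℤ)-m).toNat) b * (hCo n (((b:ℤ)-m).toNat) a + hCo n a (((b:ℤ)-m).toNat))
        else 0) = 0 := by
      split_ifs with h
      · rw [hCo_zero n _ a (by omega), hCo_zero n a _ (by omega), add_zero, mul_zero]
      · rfl
    have z2 : (if h : 0 ≤ (b:ℤ) - n then
        gB n (((b:ℤ)-n).toNat) b * (hCo m (((b:ℤ)-n).toNat) a + hCo m a (((b:ℤ)-n).toNat))
        else 0) = 0 := by
      split_ifs with h
      · rw [hCo_zero m _ a (by omega), hCo_zero m a _ (by omega), add_zero, mul_zero]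
      · rfl
    have z3 : (if h : 0 ≤ (a:ℤ) - m then
        gB m (((a:ℤ)-m).toNat) a * (hCo n (((a:ℤ)-m).toNat) b + hCo n b (((a:ℤ)-m).toNat))
        else 0) = 0 := by
      split_ifs with h
      · rw [hCo_zero n _ b (by omega), hCo_zero n b _ (by omega), add_zero, mul_zero]
      · rfl
    have z4 : (if h : 0 ≤ (a:ℤ) - n then
        gB n (((a:ℤ)-n).toNat) a * (hCo m (((a:ℤ)-n).toNat) b + hCo m b (((a:ℤ)-n).toNat))
        else 0) = 0 := by
      split_ifs with h
      · rw [hCo_zero m _ b (by omega), hCo_zero m b _ (by omega), add_zero, mul_zero]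
      · rfl
    rw [z1, z2, z3, z4, sub_zero, add_zero, hCo_zero (n+m) a b (by omega),
      hCo_zero (n+m) b a (by omega), add_zero, mul_zero]
lemma Bnd_mono {N N' : ℕ} (h : N ≤ N') {p : P} (hb : Bnd N p) : Bnd N' p :=
  fun r hr => hb r (le_trans h hr)

lemma Ao_add_p (f : ℕ → Rc) (M : ℕ) (p q : P) :
    Ao f M (p + q) = Ao f M p + Ao f M q := by
  simp only [Ao, map_add, smul_add, Finset.sum_add_distrib]

lemma Bo_add_p (g : ℕ → ℕ → Rc) (M : ℕ) (p q : P) :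
    Bo g M (p + q) = Bo g M p + Bo g M q := by
  simp only [Bo, map_add, mul_add, smul_add, Finset.sum_add_distrib]

lemma Co_add_p (h : ℕ → ℕ → Rc) (M : ℕ) (p q : P) :
    Co h M (p + q) = Co h M p + Co h M q := by
  simp only [Co, map_add, smul_add, Finset.sum_add_distrib]

lemma Ao_sub (F G : ℕ → Rc) (M : ℕ) (p : P) :
    Ao F M p - Ao G M p = Ao (fun r => F r - G r) M p := by
  simp only [Ao, sub_smul, Finset.sum_sub_distrib]

lemma Ao_Csmul (c : Rc) (F : ℕ → Rc) (M : ℕ) (p : P) :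
    c • Ao F M p = Ao (fun r => c * F r) M p := by
  simp only [Ao, smul_sum, smul_smul]

lemma Bo_Csmul (c : Rc) (G : ℕ → ℕ → Rc) (M : ℕ) (p : P) :
    c • Bo G M p = Bo (fun j u => c * G j u) M p := by
  simp only [Bo, smul_sum, smul_smul]

lemma Co_Csmul (c : Rc) (H : ℕ → ℕ → Rc) (M : ℕ) (p : P) :
    c • Co H M p = Co (fun a b => c * H a b) M p := by
  simp only [Co, smul_sum, smul_smul]

lemma Ao_eq_of {F G : ℕ → Rc} {N M : ℕ} {p : P} (hB : Bnd N p)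
    (h : ∀ u, u < N → F u = G u) : Ao F M p = Ao G M p := by
  refine Finset.sum_congr rfl fun r _ => ?_
  by_cases hr : r < N
  · rw [h r hr]
  · rw [hB r (by omega), smul_zero, smul_zero]

lemma Bo_eq_of {F G : ℕ → ℕ → Rc} {N M : ℕ} {p : P} (hB : Bnd N p)
    (h : ∀ j u, u < N → F j u = G j u) : Bo F M p = Bo G M p := by
  refine Finset.sum_congr rfl fun j _ => Finset.sum_congr rfl fun u _ => ?_
  by_cases hu : u < N
  · rw [h j u hu]
  · rw [hB u (by omega), mul_zero, smul_zero, smul_zero]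

lemma Co_swap (K : ℕ → ℕ → Rc) (M : ℕ) (p : P) :
    Co K M p = ∑ a ∈ range M, ∑ b ∈ range M, K b a • pderiv a (pderiv b p) := by
  rw [Co, Finset.sum_comm]
  refine Finset.sum_congr rfl fun a _ => Finset.sum_congr rfl fun b _ => ?_
  rw [pderiv_comm']

lemma Co_double (K : ℕ → ℕ → Rc) (M : ℕ) (p : P) :
    Co K M p + Co K M p
      = ∑ a ∈ range M, ∑ b ∈ range M, (K a b + K b a) • pderiv a (pderiv b p) := by
  nth_rewrite 2 [Co_swap]
  rw [Co, ← Finset.sum_add_distrib]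
  refine Finset.sum_congr rfl fun a _ => ?_
  rw [← Finset.sum_add_distrib]
  refine Finset.sum_congr rfl fun b _ => ?_
  rw [add_smul]

lemma Co_eq_of_symm {H H' : ℕ → ℕ → Rc} {N M : ℕ} {p : P} (hB : Bnd N p)
    (h : ∀ a b, a < N → b < N → H a b + H b a = H' a b + H' b a) :
    Co H M p = Co H' M p := by
  have h2 : Co H M p + Co H M p = Co H' M p + Co H' M p := by
    rw [Co_double, Co_double]
    refine Finset.sum_congr rfl fun a _ => Finset.sum_congr rfl fun b _ => ?_
    by_cases ha : a < N
    · by_cases hb : b < N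
      · rw [h a b ha hb]
      · rw [hB b (by omega), map_zero, smul_zero, smul_zero]
    · rw [pderiv_comm', hB a (by omega), map_zero, smul_zero, smul_zero]
  calc Co H M p = (1/2:ℝ) • (Co H M p + Co H M p) := by
        rw [← two_smul ℝ (Co H M p), smul_smul]; norm_num
    _ = (1/2:ℝ) • (Co H' M p + Co H' M p) := by rw [h2]
    _ = Co H' M p := by rw [← two_smul ℝ (Co H' M p), smul_smul]; norm_num

lemma pderiv_qDm1 (r : ℕ) :
    pderiv r (qD (-1)) = if r = 0 then Polynomial.C (1/2:ℝ) • (X 0 : P) else 0 := by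
  rw [qD, if_pos rfl, Derivation.map_smul, pderiv_X_mul]
  by_cases hr : r = 0
  · subst hr
    rw [if_pos rfl, if_pos rfl, pderiv_X_self, mul_one, smul_add, ← add_smul, ← Polynomial.C_add]
    norm_num
  · rw [if_neg hr, if_neg hr, pderiv_X_of_ne (by omega), mul_zero, zero_add, smul_zero]
lemma pderiv_qD_const (k : ℤ) (hk : 0 ≤ k) (r : ℕ) : pderiv r (qD k) = 0 := by
  rw [qD, if_neg (by omega)]
  by_cases h : k = 0
  · rw [if_pos h, Derivation.map_smul, pderiv_one, smul_zero]
  · rw [if_neg h, map_zero]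

lemma pderiv2_qDm1 (a b : ℕ) :
    pderiv a (pderiv b (qD (-1)))
      = if a = 0 ∧ b = 0 then Polynomial.C (1/2:ℝ) • (1:P) else 0 := by
  rw [pderiv_qDm1]
  by_cases hb : b = 0
  · rw [if_pos hb, Derivation.map_smul]
    by_cases ha : a = 0
    · rw [ha, pderiv_X_self, if_pos ⟨rfl, hb⟩]
    · rw [pderiv_X_of_ne (fun h => ha h.symm), smul_zero, if_neg (by tauto)]
  · rw [if_neg hb, map_zero, if_neg (by tauto)]

lemma MQ (n m : ℤ) (hm : -1 ≤ m) (hmn : m < n) (M : ℕ) (hM : 1 ≤ M) (p : P) :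
    (Ao (fA n) M (qD m * p) - qD m * Ao (fA n) M p)
    + (qD n * Ao (fA m) M p - Ao (fA m) M (qD n * p))
    + (Bo (gB n) M (qD m * p) - qD m * Bo (gB n) M p)
    + (qD n * Bo (gB m) M p - Bo (gB m) M (qD n * p))
    + (Co (hCo n) M (qD m * p) - qD m * Co (hCo n) M p)
    + (qD n * Co (hCo m) M p - Co (hCo m) M (qD n * p))
    = Bo (gCQ n m) M p + Polynomial.C ((n-m:ℤ):ℝ) • (qD (n+m) * p) := by
  have hn : (0:ℤ) ≤ n := by omega
  have hqn : ∀ r, pderiv r (qD n) = 0 := pderiv_qD_const n hn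
  have z1 : qD n * Ao (fA m) M p - Ao (fA m) M (qD n * p) = 0 := by
    rw [← neg_sub, L_AQ]
    simp [hqn]
  have z2 : qD n * Bo (gB m) M p - Bo (gB m) M (qD n * p) = 0 := by
    rw [← neg_sub, L_BQ]
    simp [hqn]
  have z3 : qD n * Co (hCo m) M p - Co (hCo m) M (qD n * p) = 0 := by
    rw [← neg_sub, L_CQ]
    simp [hqn]
  rw [z1, z2, z3, add_zero, add_zero, add_zero]
  by_cases hm1 : m = -1
  case neg =>
    have hm0 : (0:ℤ) ≤ m := by omega
    have hqm : ∀ r, pderiv r (qD m) = 0 := pderiv_qD_const m hm0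
    have w1 : Ao (fA n) M (qD m * p) - qD m * Ao (fA n) M p = 0 := by rw [L_AQ]; simp [hqm]
    have w2 : Bo (gB n) M (qD m * p) - qD m * Bo (gB n) M p = 0 := by rw [L_BQ]; simp [hqm]
    have w3 : Co (hCo n) M (qD m * p) - qD m * Co (hCo n) M p = 0 := by rw [L_CQ]; simp [hqm]
    have w4 : Bo (gCQ n m) M p = 0 := by
      rw [Bo]
      refine Finset.sum_eq_zero fun j _ => Finset.sum_eq_zero fun u _ => ?_
      rw [gCQ, if_neg (by tauto), zero_smul]
    have w5 : qD (n+m) = 0 := by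
      rw [qD, if_neg (by omega), if_neg (by omega)]
    rw [w1, w2, w3, w4, w5, zero_mul, smul_zero]
    simp
  case pos =>
    subst hm1
    rw [L_AQ, L_BQ, L_CQ]
    have zA : (∑ r ∈ range M, fA n r • (pderiv r (qD (-1)) * p)) = 0 := by
      refine Finset.sum_eq_zero fun r _ => ?_
      rw [pderiv_qDm1]
      by_cases hr : r = 0
      · rw [if_pos hr, hr, fA, if_neg (by omega), zero_smul]
      · rw [if_neg hr, zero_mul, smul_zero]
    rw [zA, zero_add]
    -- B-part
    have hBQ : (∑ j ∈ range M, ∑ u ∈ range M, gB n j u • (X j * (pderiv u (qD (-1)) * p)))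
        = gB n 0 0 • (X 0 * ((Polynomial.C (1/2:ℝ) • (X 0 : P)) * p)) := by
      calc (∑ j ∈ range M, ∑ u ∈ range M, gB n j u • (X j * (pderiv u (qD (-1)) * p)))
          = ∑ j ∈ range M, (if j = 0 then
              gB n 0 0 • (X 0 * ((Polynomial.C (1/2:ℝ) • (X 0 : P)) * p)) else 0) := by
            refine Finset.sum_congr rfl fun j _ => ?_
            calc ∑ u ∈ range M, gB n j u • (X j * (pderiv u (qD (-1)) * p))
                = ∑ u ∈ range M, (if u = 0 then
                    gB n j 0 • (X j * ((Polynomial.C (1/2:ℝ) • (X 0:P)) * p)) else 0) := by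
                  refine Finset.sum_congr rfl fun u _ => ?_
                  by_cases hu : u = 0
                  · rw [if_pos hu, hu, pderiv_qDm1, if_pos rfl]
                  · rw [if_neg hu, pderiv_qDm1, if_neg hu, zero_mul, mul_zero, smul_zero]
              _ = gB n j 0 • (X j * ((Polynomial.C (1/2:ℝ) • (X 0:P)) * p)) := by
                  rw [Finset.sum_ite_eq' (range M) 0, if_pos (Finset.mem_range.2 (by omega))]
              _ = if j = 0 then
                    gB n 0 0 • (X 0 * ((Polynomial.C (1/2:ℝ) • (X 0 : P)) * p)) else 0 := by
                  by_cases hj : j = 0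
                  · rw [if_pos hj, hj]
                  · rw [if_neg hj, gB_zero n j 0 (by omega), zero_smul]
        _ = _ := by
            rw [Finset.sum_ite_eq' (range M) 0, if_pos (Finset.mem_range.2 (by omega))]
    rw [hBQ]
    -- C-part: split into three sums
    have hCQ : (∑ a ∈ range M, ∑ b ∈ range M, hCo n a b •
          (pderiv a (pderiv b (qD (-1))) * p + pderiv b (qD (-1)) * pderiv a p
            + pderiv a (qD (-1)) * pderiv b p))
        = (∑ a ∈ range M, ∑ b ∈ range M, hCo n a b • (pderiv a (pderiv b (qD (-1))) * p))
          + (∑ a ∈ range M, ∑ b ∈ range M, hCo n a b • (pderiv b (qD (-1)) * pderiv a p))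
          + (∑ a ∈ range M, ∑ b ∈ range M, hCo n a b • (pderiv a (qD (-1)) * pderiv b p)) := by
      simp only [smul_add, Finset.sum_add_distrib]
    rw [hCQ]
    have hS1 : (∑ a ∈ range M, ∑ b ∈ range M, hCo n a b • (pderiv a (pderiv b (qD (-1))) * p))
        = hCo n 0 0 • ((Polynomial.C (1/2:ℝ) • (1:P)) * p) := by
      rw [show (∑ a ∈ range M, ∑ b ∈ range M, hCo n a b • (pderiv a (pderiv b (qD (-1))) * p))
          = ∑ a ∈ range M, (if a = 0 then hCo n a 0 • ((Polynomial.C (1/2:ℝ) • (1:P)) * p)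
              else 0) from Finset.sum_congr rfl fun a _ => ?_]
      · rw [Finset.sum_ite_eq' (range M) 0
            (fun a => hCo n a 0 • ((Polynomial.C (1/2:ℝ) • (1:P)) * p)),
          if_pos (Finset.mem_range.2 (by omega))]
      · by_cases ha : a = 0
        · rw [if_pos ha]
          calc ∑ b ∈ range M, hCo n a b • (pderiv a (pderiv b (qD (-1))) * p)
              = ∑ b ∈ range M, (if b = 0 then
                  hCo n a 0 • ((Polynomial.C (1/2:ℝ) • (1:P)) * p) else 0) := by
                refine Finset.sum_congr rfl fun b _ => ?_
                by_cases hb : b = 0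
                · rw [if_pos hb, hb, pderiv2_qDm1, if_pos ⟨ha, rfl⟩]
                · rw [if_neg hb, pderiv2_qDm1, if_neg (by tauto), zero_mul, smul_zero]
            _ = hCo n a 0 • ((Polynomial.C (1/2:ℝ) • (1:P)) * p) := by
                rw [Finset.sum_ite_eq' (range M) 0, if_pos (Finset.mem_range.2 (by omega))]
        · rw [if_neg ha]
          refine Finset.sum_eq_zero fun b _ => ?_
          rw [pderiv2_qDm1, if_neg (by tauto), zero_mul, smul_zero]
    have hS2 : (∑ a ∈ range M, ∑ b ∈ range M, hCo n a b • (pderiv b (qD (-1)) * pderiv a p))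
        = ∑ a ∈ range M, hCo n a 0 • ((Polynomial.C (1/2:ℝ) • (X 0:P)) * pderiv a p) := by
      refine Finset.sum_congr rfl fun a _ => ?_
      calc ∑ b ∈ range M, hCo n a b • (pderiv b (qD (-1)) * pderiv a p)
          = ∑ b ∈ range M, (if b = 0 then
              hCo n a 0 • ((Polynomial.C (1/2:ℝ) • (X 0:P)) * pderiv a p) else 0) := by
            refine Finset.sum_congr rfl fun b _ => ?_
            by_cases hb : b = 0
            · rw [if_pos hb, hb, pderiv_qDm1, if_pos rfl]
            · rw [if_neg hb, pderiv_qDm1, if_neg hb, zero_mul, smul_zero]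
        _ = _ := by
            rw [Finset.sum_ite_eq' (range M) 0, if_pos (Finset.mem_range.2 (by omega))]
    have hS3 : (∑ a ∈ range M, ∑ b ∈ range M, hCo n a b • (pderiv a (qD (-1)) * pderiv b p))
        = ∑ b ∈ range M, hCo n 0 b • ((Polynomial.C (1/2:ℝ) • (X 0:P)) * pderiv b p) := by
      rw [show (∑ a ∈ range M, ∑ b ∈ range M, hCo n a b • (pderiv a (qD (-1)) * pderiv b p))
          = ∑ a ∈ range M, (if a = 0 then
              ∑ b ∈ range M, hCo n 0 b • ((Polynomial.C (1/2:ℝ) • (X 0:P)) * pderiv b p)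
              else 0) from Finset.sum_congr rfl fun a _ => ?_]
      · rw [Finset.sum_ite_eq' (range M) 0, if_pos (Finset.mem_range.2 (by omega))]
      · by_cases ha : a = 0
        · rw [if_pos ha, ha]
          refine Finset.sum_congr rfl fun b _ => ?_
          rw [pderiv_qDm1, if_pos rfl]
        · rw [if_neg ha]
          refine Finset.sum_eq_zero fun b _ => ?_
          rw [pderiv_qDm1, if_neg ha, zero_mul, smul_zero]
    rw [hS1, hS2, hS3]
    -- now match
    have hBo : Bo (gCQ n (-1)) M p
        = ∑ u ∈ range M, (Polynomial.C (1/2:ℝ) * (hCo n u 0 + hCo n 0 u)) • (X 0 * pderiv u p) := by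
      rw [Bo]
      rw [show (∑ j ∈ range M, ∑ u ∈ range M, gCQ n (-1) j u • (X j * pderiv u p))
          = ∑ j ∈ range M, (if j = 0 then
            ∑ u ∈ range M, (Polynomial.C (1/2:ℝ) * (hCo n u 0 + hCo n 0 u)) • (X 0 * pderiv u p)
            else 0) from Finset.sum_congr rfl fun j _ => ?_]
      · rw [Finset.sum_ite_eq' (range M) 0, if_pos (Finset.mem_range.2 (by omega))]
      · by_cases hj : j = 0
        · rw [if_pos hj, hj]
          refine Finset.sum_congr rfl fun u _ => ?_
          rw [gCQ, if_pos ⟨rfl, rfl⟩]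
        · rw [if_neg hj]
          refine Finset.sum_eq_zero fun u _ => ?_
          rw [gCQ, if_neg (by tauto), zero_smul]
    have hmatch : (∑ a ∈ range M, hCo n a 0 • ((Polynomial.C (1/2:ℝ) • (X 0:P)) * pderiv a p))
          + (∑ b ∈ range M, hCo n 0 b • ((Polynomial.C (1/2:ℝ) • (X 0:P)) * pderiv b p))
        = Bo (gCQ n (-1)) M p := by
      rw [hBo, ← Finset.sum_add_distrib]
      refine Finset.sum_congr rfl fun u _ => ?_
      simp only [smul_mul_assoc, smul_smul]
      rw [← add_smul]
      congr 1
      ring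
    -- scalar part
    have hscal : gB n 0 0 • (X 0 * ((Polynomial.C (1/2:ℝ) • (X 0 : P)) * p))
          + hCo n 0 0 • ((Polynomial.C (1/2:ℝ) • (1:P)) * p)
        = Polynomial.C ((n-(-1):ℤ):ℝ) • (qD (n + -1) * p) := by
      by_cases hn0 : n = 0
      · subst hn0
        rw [hCo_zero 0 0 0 (by omega), zero_smul, add_zero,
          gB_eq 0 0 0 (by omega), qD, if_pos (by omega)]
        simp only [smul_mul_assoc, mul_smul_comm, smul_smul, mul_assoc, ← Polynomial.C_mul]
        congr 1
        rw [dfo_zero, dfop_zero]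
        norm_num
      · have hgB0 : gB n 0 0 = 0 := gB_zero n 0 0 (by omega)
        rw [hgB0, zero_smul, zero_add]
        by_cases hn1 : n = 1
        · subst hn1
          rw [hCo_eq 1 0 0 (by omega), qD, if_neg (by omega), if_pos (by omega)]
          simp only [smul_mul_assoc, one_mul, smul_smul, ← Polynomial.C_mul]
          congr 1
          rw [dfo_zero]
          norm_num
        · rw [hCo_zero n 0 0 (by omega), zero_smul, qD, if_neg (by omega), if_neg (by omega),
            zero_mul, smul_zero]
    rw [← hmatch, ← hscal]
    abel
lemma exists_bnd (p : P) : ∃ N, Bnd N p := by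
  refine ⟨p.vars.sup id + 1, fun r hr => pderiv_eq_zero_of_notMem_vars fun hmem => ?_⟩
  have := Finset.le_sup (f := id) hmem
  simp only [id_eq] at this
  omega

lemma Bo_addc (K1 K2 : ℕ → ℕ → Rc) (M : ℕ) (p : P) :
    Bo K1 M p + Bo K2 M p = Bo (fun j u => K1 j u + K2 j u) M p := by
  simp only [Bo, add_smul, Finset.sum_add_distrib]

lemma Co_subc (K1 K2 : ℕ → ℕ → Rc) (M : ℕ) (p : P) :
    Co K1 M p - Co K2 M p = Co (fun a b => K1 a b - K2 a b) M p := by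
  simp only [Co, sub_smul, Finset.sum_sub_distrib]

lemma main_lt (n m : ℤ) (hm : -1 ≤ m) (hmn : m < n) (p : P) :
    Vop n (Vop m p) - Vop m (Vop n p) = (n - m) • Vop (n + m) p := by
  have hn : -1 ≤ n := by omega
  have hnm : -1 ≤ n + m := by omega
  obtain ⟨N₀', hN₀'⟩ := exists_bnd p
  obtain ⟨N₁, hN₁⟩ := exists_bnd (Vop m p)
  obtain ⟨N₂, hN₂⟩ := exists_bnd (Vop n p)
  set N₀ : ℕ := N₀' + N₁ + N₂ + 1 with hN₀def
  have hBp : Bnd N₀ p := Bnd_mono (by omega) hN₀'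
  have hBm : Bnd N₀ (Vop m p) := Bnd_mono (by omega) hN₁
  have hBn : Bnd N₀ (Vop n p) := Bnd_mono (by omega) hN₂
  set M : ℕ := N₀ + n.toNat + m.toNat + (n+m).toNat + 3 with hMdef
  have em : Vop m p = Ao (fA m) M p + Bo (gB m) M p + Co (hCo m) M p + qD m * p :=
    Vop_eq m hm p hBp (by omega) (by omega)
  have en : Vop n p = Ao (fA n) M p + Bo (gB n) M p + Co (hCo n) M p + qD n * p :=
    Vop_eq n hn p hBp (by omega) (by omega)
  have enm : Vop (n+m) p
      = Ao (fA (n+m)) M p + Bo (gB (n+m)) M p + Co (hCo (n+m)) M p + qD (n+m) * p :=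
    Vop_eq (n+m) hnm p hBp (by omega) (by omega)
  have eoutn : Vop n (Vop m p)
      = Ao (fA n) M (Vop m p) + Bo (gB n) M (Vop m p) + Co (hCo n) M (Vop m p)
        + qD n * (Vop m p) :=
    Vop_eq n hn (Vop m p) hBm (by omega) (by omega)
  have eoutm : Vop m (Vop n p)
      = Ao (fA m) M (Vop n p) + Bo (gB m) M (Vop n p) + Co (hCo m) M (Vop n p)
        + qD m * (Vop n p) :=
    Vop_eq m hm (Vop n p) hBn (by omega) (by omega)
  rw [eoutn, eoutm, em, en, enm]
  simp only [Ao_add_p, Bo_add_p, Co_add_p, mul_add]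
  have hzs : ∀ x : P, (n - m) • x = Polynomial.C ((n-m:ℤ):ℝ) • x := fun x => by
    rw [show Polynomial.C (((n-m):ℤ):ℝ) = (((n-m):ℤ) : Polynomial ℝ) from map_intCast _ _]
    exact (Int.cast_smul_eq_zsmul _ _ _).symm
  rw [hzs, smul_add, smul_add, smul_add, Ao_Csmul, Bo_Csmul, Co_Csmul, smul_eq_C_mul]
  -- commutator groups
  have GAA := L_AA (fA n) (fA m) M p
  have GAB := L_AB (fA n) (gB m) M p
  have GBA := L_AB (fA m) (gB n) M p
  have GAC := L_AC (fA n) (hCo m) M p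
  have GCA := L_AC (fA m) (hCo n) M p
  have GBB := L_BB (gB n) (gB m) M p
  have GBC := L_BC (gB n) (hCo m) M p
  have GCB := L_BC (gB m) (hCo n) M p
  have GCC := L_CC (hCo n) (hCo m) M p
  have GQQ := L_QQ (qD n) (qD m) p
  have GQ := MQ n m hm hmn M (by omega) p
  rw [smul_eq_C_mul] at GQ
  -- matching identities
  have MA : Ao (fun u => ∑ j ∈ range M, fA n j * gB m j u) M p
        - Ao (fun u => ∑ j ∈ range M, fA m j * gB n j u) M p
      = Ao (fun r => Polynomial.C ((n-m:ℤ):ℝ) * fA (n+m) r) M p := by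
    rw [Ao_sub]
    refine Ao_eq_of hBp fun u hu => ?_
    have h := idA n m hm hmn u M (by omega)
    rw [Finset.sum_sub_distrib] at h
    exact h
  have MB : Bo (fun j u => ∑ l ∈ range M, (gB n j l * gB m l u - gB m j l * gB n l u)) M p
        + Bo (gCQ n m) M p
      = Bo (fun j u => Polynomial.C ((n-m:ℤ):ℝ) * gB (n+m) j u) M p := by
    rw [Bo_addc]
    refine Bo_eq_of hBp fun j u hu => ?_
    exact idB n m hm hmn j u M (by omega)
  have MC : Co (fun a b => -(∑ j ∈ range M, gB n j b * (hCo m j a + hCo m a j))) M p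
        - Co (fun a b => -(∑ j ∈ range M, gB m j b * (hCo n j a + hCo n a j))) M p
      = Co (fun a b => Polynomial.C ((n-m:ℤ):ℝ) * hCo (n+m) a b) M p := by
    rw [Co_subc]
    refine Co_eq_of_symm hBp fun a b ha hb => ?_
    have h := idC n m hm hmn a b M (by omega) (by omega)
    rw [Finset.sum_sub_distrib, Finset.sum_sub_distrib, mul_add] at h
    linear_combination h
  -- put everything together
  linear_combination GAA + GAB - GBA + GAC - GCA + GBB + GBC - GCB + GCC + GQQ + GQ + MA + MB + MC



/-- The Virasoro relations `[V_n, V_m] = (n − m) V_{n+m}` for `n, m ≥ −1`, as operators on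
`P` (stated pointwise, i.e. as an equality of endomorphisms of `P`). -/
theorem virasoro_relations_Vop (n m : ℤ) (hn : -1 ≤ n) (hm : -1 ≤ m) :
    ∀ p : P, Vop n (Vop m p) - Vop m (Vop n p) = (n - m) • Vop (n + m) p := by
  intro p
  rcases lt_trichotomy m n with h | h | h
  · exact main_lt n m hm h p
  · subst h
    simp [sub_self]
  · have key := main_lt m n hn h p
    rw [show Vop n (Vop m p) - Vop m (Vop n p) = -(Vop m (Vop n p) - Vop n (Vop m p)) from
      (neg_sub _ _).symm, key, show m + n = n + m from add_comm m n, ← neg_smul]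
    congr 1
    omega

end
end

section
/- For every n ∈ ℕ, the convolution identity Σ_{m=0}^{n} α_{n−m} · β_m = δ_{n,0} holds in ℚ, i.e. the sum equals 1 if n = 0 and equals 0 if n ≥ 1. (Equivalently, the formal power series Σ α_i s^i and Σ β_i s^i in ℚ⟦s⟧ are multiplicative inverses of each other.) -/
/-!
With `B(x) = x / (eˣ - 1)`, the series `F(x) = B(2x) - 2 B(x)` is `-x / sinh x`, so
`F · (eˣ - e⁻ˣ) = -2x`. In the coefficient of `x^(2n+1)` only the even coefficients
`(2^(2m) - 2) B_(2m) / (2m)!` of `F` meet the odd coefficients `2 / (2k+1)!` of `eˣ - e⁻ˣ`, and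
`α_k β_m` is their product times `(-1)^(k+m+1) 2^(k+m-1)` (the substitution `s = x² / 2`).
-/

/-- `α_i = (−2)^i/(2i+1)!` as a rational number. -/
def alphaQ (i : ℕ) : ℚ := (-2 : ℚ) ^ i / Nat.factorial (2 * i + 1)

/-- `β_i = (−1)^{i−1} · 2^i · (2^{2i} − 2) · B_{2i}/(2i)!` as a rational number.
(We write `(−1)^{i+1} = (−1)^{i−1}`, which is also correct for `i = 0`;
in particular `β_0 = 1` and `β_1 = 1/3`.) -/
def betaQ (i : ℕ) : ℚ :=
  (-1 : ℚ) ^ (i + 1) * 2 ^ i * (2 ^ (2 * i) - 2) *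
    bernoulli (2 * i) / Nat.factorial (2 * i)

open Finset PowerSeries

theorem Finset.sum_range_two_mul {M : Type*} [AddCommMonoid M] (f : ℕ → M) (n : ℕ) :
    ∑ i ∈ range (2 * n), f i = ∑ i ∈ range n, (f (2 * i) + f (2 * i + 1)) := by
  induction n with
  | zero => simp
  | succ n ih =>
    rw [Nat.mul_succ, sum_range_succ, sum_range_succ, sum_range_succ, ih, add_assoc]

namespace PowerSeries

theorem coeff_two_mul_add_one_mul_of_coeff_two_mul_eq_zero {R : Type*} [CommSemiring R]
    {f g : R⟦X⟧} (hg : ∀ k, coeff (2 * k) g = 0) (n : ℕ) :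
    coeff (2 * n + 1) (f * g)
      = ∑ m ∈ range (n + 1), coeff (2 * m) f * coeff (2 * (n - m) + 1) g := by
  rw [coeff_mul, Nat.sum_antidiagonal_eq_sum_range_succ_mk,
    show (2 * n + 1).succ = 2 * (n + 1) by omega, sum_range_two_mul]
  refine sum_congr rfl fun m hm => ?_
  have hmn : m ≤ n := Nat.lt_succ_iff.mp (mem_range.mp hm)
  rw [show 2 * n + 1 - (2 * m + 1) = 2 * (n - m) by omega, hg, mul_zero, add_zero,
    show 2 * n + 1 - 2 * m = 2 * (n - m) + 1 by omega]

section

variable (A : Type*) [CommRing A] [Algebra ℚ A]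

noncomputable def twoSinhSeries : A⟦X⟧ := exp A - evalNegHom (exp A)

noncomputable def negXDivSinhSeries : A⟦X⟧ :=
  rescale 2 (bernoulliPowerSeries A) - 2 * bernoulliPowerSeries A

theorem negXDivSinhSeries_mul_twoSinhSeries :
    negXDivSinhSeries A * twoSinhSeries A = -(2 * X) := by
  set B := bernoulliPowerSeries A
  set E := exp A
  have hB : B * (E - 1) = X := bernoulliPowerSeries_mul_exp_sub_one A
  have hE₂ : rescale 2 E = E * E := by
    rw [← one_add_one_eq_two, ← exp_mul_exp_eq_exp_add, rescale_one, RingHom.id_apply]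
  have hB₂ : rescale 2 B * (E * E - 1) = 2 * X := by
    have h := congrArg (rescale (2 : A)) hB
    rwa [map_mul, map_sub, map_one, rescale_X, map_ofNat C 2, hE₂] at h
  have hE : E * evalNegHom E = 1 := exp_mul_exp_neg_eq_one
  unfold negXDivSinhSeries twoSinhSeries
  -- times `eˣ`, the left side is `B(2x) (e²ˣ - 1) - 2 B(x) (eˣ - 1) (eˣ + 1) = 2x - 2x (eˣ + 1)`
  linear_combination evalNegHom E * hB₂ - 2 * (E + 1) * evalNegHom E * hB
    - ((rescale 2 B - 2 * B) * E + 2 * X) * hE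

variable {A}

theorem coeff_negXDivSinhSeries (k : ℕ) :
    coeff k (negXDivSinhSeries A)
      = algebraMap ℚ A ((2 ^ k - 2) * bernoulli k / Nat.factorial k) := by
  rw [negXDivSinhSeries, map_sub, ← map_ofNat C 2, coeff_C_mul, coeff_rescale,
    bernoulliPowerSeries, coeff_mk, mul_div_assoc, map_mul, map_sub, map_pow, map_ofNat, sub_mul]

theorem coeff_two_mul_twoSinhSeries (k : ℕ) : coeff (2 * k) (twoSinhSeries A) = 0 := by
  simp [twoSinhSeries, evalNegHom, coeff_rescale, pow_mul]

theorem coeff_two_mul_add_one_twoSinhSeries (k : ℕ) :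
    coeff (2 * k + 1) (twoSinhSeries A) = algebraMap ℚ A (2 / Nat.factorial (2 * k + 1)) := by
  simp [twoSinhSeries, evalNegHom, coeff_rescale, pow_succ, pow_mul, ← two_mul, div_eq_mul_inv,
    map_ofNat]

end

end PowerSeries

theorem alphaQ_mul_betaQ (k m : ℕ) :
    alphaQ k * betaQ m = (-1) ^ (k + m + 1) * 2 ^ (k + m) / 2 *
      (coeff (2 * m) (negXDivSinhSeries ℚ) * coeff (2 * k + 1) (twoSinhSeries ℚ)) := by
  rw [coeff_negXDivSinhSeries, coeff_two_mul_add_one_twoSinhSeries, alphaQ, betaQ, neg_pow]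
  simp only [Algebra.algebraMap_self, RingHom.id_apply]
  ring

/-- The convolution identity: `Σ_{m=0}^{n} α_{n−m} β_m` equals `1` if `n = 0`
and `0` if `n ≥ 1`. -/
theorem alpha_beta_convolution (n : ℕ) :
    ∑ m ∈ Finset.range (n + 1), alphaQ (n - m) * betaQ m
      = if n = 0 then 1 else 0 := by
  have h := congrArg (coeff (2 * n + 1)) (negXDivSinhSeries_mul_twoSinhSeries ℚ)
  rw [coeff_two_mul_add_one_mul_of_coeff_two_mul_eq_zero coeff_two_mul_twoSinhSeries] at h
  calc ∑ m ∈ range (n + 1), alphaQ (n - m) * betaQ m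
      = (-1) ^ (n + 1) * 2 ^ n / 2 * ∑ m ∈ range (n + 1),
          coeff (2 * m) (negXDivSinhSeries ℚ) * coeff (2 * (n - m) + 1) (twoSinhSeries ℚ) := by
        rw [mul_sum]
        refine sum_congr rfl fun m hm => ?_
        rw [alphaQ_mul_betaQ, Nat.sub_add_cancel (Nat.lt_succ_iff.mp (mem_range.mp hm))]
    _ = (-1) ^ (n + 1) * 2 ^ n / 2 * coeff (2 * n + 1) (-(2 * X) : ℚ⟦X⟧) := by rw [h]
    _ = if n = 0 then 1 else 0 := by
        rw [map_neg, ← map_ofNat C 2, coeff_C_mul, coeff_X]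
        rcases n with _ | n <;> simp
end
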